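/- arXiv:2302.10694 — 6 statements merged into one kernel-verified Lean document; each statement's English description precedes it below -/
import Mathlib

section
/- Let R be an associative unital ℂ-algebra with a derivation D (write r' := D r), let x ∈ R be central with x' = 1, let θ ∈ ℂ, and let f, g, b ∈ R with b' = 0. Define the 2×2 matrices over the polynomial ring R[λ] (λ a central indeterminate): A(λ) = [[2,0],[0,0]]λ² + [[0, −2f²+g−x−2b],[−2, 0]]λ + [[−2f²+g, 2f³−fg+f(x+2b)+θ−1],[−2f, 2f²−g+x+2b]] and B(λ) = [[1,0],[0,0]]λ + [[0, −f² + (1/2)g − (1/2)x − b],[−1, f]]. Then the zero-curvature equation ∂ₓA − ∂_λB + AB − BA = 0 holds identically in λ if and only if f' = −f² + g − (1/2)x − b and g' = gf + fg + θ. (The Jimbo–Miwa pair JM₂⁰ is an isomonodromic Lax pair exactly for the non-abelian system P₂⁰.) -/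
/- STATEMENT 2: The Jimbo–Miwa pair JM₂⁰ is an isomonodromic Lax pair exactly for the
non-abelian system P₂⁰: the zero-curvature equation ∂ₓA − ∂_λB + AB − BA = 0 holds
identically in λ iff f' = −f² + g − (1/2)x − b and g' = gf + fg + θ. -/

noncomputable section

variable (R : Type*) [Ring R] [Algebra ℂ R]

/-- The λ-dependent matrix `A(λ)` of the Jimbo–Miwa pair JM₂⁰. -/
def JM20A (f g b x : R) (θ : ℂ) (lam : ℂ) : Matrix (Fin 2) (Fin 2) R :=
  (lam ^ 2) • !![(2 : R), 0; 0, 0]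
    + lam • !![(0 : R), -2 * f ^ 2 + g - x - 2 * b; -2, 0]
    + !![-2 * f ^ 2 + g, 2 * f ^ 3 - f * g + f * (x + 2 * b) + algebraMap ℂ R θ - 1;
         -2 * f, 2 * f ^ 2 - g + x + 2 * b]

/-- The λ-dependent matrix `B(λ)` of the Jimbo–Miwa pair JM₂⁰. -/
def JM20B (f g b x : R) (lam : ℂ) : Matrix (Fin 2) (Fin 2) R :=
  lam • !![(1 : R), 0; 0, 0]
    + !![(0 : R), -f ^ 2 + (1 / 2 : ℂ) • g - (1 / 2 : ℂ) • x - b; -1, f]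

theorem JM20_zero_curvature_iff_P20
    (D : R →ₗ[ℂ] R) (hD : ∀ a b : R, D (a * b) = D a * b + a * D b)
    (x : R) (hx : ∀ r : R, x * r = r * x) (hx1 : D x = 1)
    (θ : ℂ) (f g b : R) (hb : D b = 0) :
    (∀ lam : ℂ,
        (JM20A R f g b x θ lam).map ⇑D - !![(1 : R), 0; 0, 0]
          + JM20A R f g b x θ lam * JM20B R f g b x lam
          - JM20B R f g b x lam * JM20A R f g b x θ lam = 0)
      ↔ (D f = -f ^ 2 + g - (1 / 2 : ℂ) • x - b ∧
          D g = g * f + f * g + algebraMap ℂ R θ) := by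
  have hD1 : D 1 = 0 := by
    have := hD 1 1
    simpa using this.symm
  have hD2 : D 2 = 0 := by
    rw [show (2:R) = 1 + 1 by norm_num, map_add, hD1, add_zero]
  have hDθ : D (algebraMap ℂ R θ) = 0 := by
    rw [Algebra.algebraMap_eq_smul_one, map_smul, hD1, smul_zero]
  have h2l : ∀ r : R, (2:R) * r = (2:ℂ) • r := fun r => by
    rw [Algebra.smul_def, map_ofNat]
  have h2r : ∀ r : R, r * (2:R) = (2:ℂ) • r := fun r => by
    rw [Algebra.smul_def, map_ofNat]; exact Commute.ofNat_right r 2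
  have h2c : (2:R) = (2:ℂ) • (1:R) := by rw [Algebra.smul_def, map_ofNat, mul_one]
  have hxf : ∀ y : R, f * (x * y) = x * (f * y) := fun y => by
    rw [← mul_assoc, ← hx f, mul_assoc]
  have hxf' : f * x = x * f := (hx f).symm
  have hxg : ∀ y : R, g * (x * y) = x * (g * y) := fun y => by
    rw [← mul_assoc, ← hx g, mul_assoc]
  have hxg' : g * x = x * g := (hx g).symm
  have hxb : ∀ y : R, b * (x * y) = x * (b * y) := fun y => by
    rw [← mul_assoc, ← hx b, mul_assoc]
  have hxb' : b * x = x * b := (hx b).symm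
  have hdf : f * algebraMap ℂ R θ = algebraMap ℂ R θ * f := (Algebra.commutes θ f).symm
  have hdf' : ∀ y : R, f * (algebraMap ℂ R θ * y) = algebraMap ℂ R θ * (f * y) := fun y => by
    rw [← mul_assoc, hdf, mul_assoc]
  constructor
  · -- forward direction
    intro h
    have e10 := congr_fun (congr_fun (h 0) 1) 0
    have e00 := congr_fun (congr_fun (h 0) 0) 0
    simp only [JM20A, JM20B, Matrix.map_apply, Matrix.add_apply, Matrix.smul_apply,
        Matrix.sub_apply, Matrix.mul_apply, Fin.sum_univ_two, Matrix.zero_apply,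
        Matrix.of_apply, Matrix.cons_val', Matrix.cons_val_zero, Matrix.cons_val_one,
        Matrix.head_cons, Matrix.head_fin_const, Matrix.empty_val', Matrix.cons_val_fin_one,
        zero_smul, zero_add, add_zero, zero_mul, mul_zero, neg_zero, one_mul, mul_one,
        pow_succ, pow_zero, map_add, map_sub, map_neg, map_smul, hD, hb, map_zero]
      at e10 e00
    rw [hD2] at e10 e00
    have hDf : D f = -f ^ 2 + g - (1 / 2 : ℂ) • x - b := by
      have k : D f - (-f ^ 2 + g - (1 / 2 : ℂ) • x - b) =
          (-(1/2) : ℂ) • (-0 * f + -2 * D f - 0 + (2 * (f * f) - g + x + 2 * b) * -1 -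
            (-1 * (-2 * (f * f) + g) + f * (-2 * f))) := by
        simp only [pow_succ, pow_zero, one_mul, mul_add, add_mul, mul_sub, sub_mul, neg_mul,
          mul_neg, neg_neg, mul_assoc, mul_one, zero_mul, mul_zero, smul_mul_assoc,
          mul_smul_comm, h2l, smul_add, smul_sub, smul_neg, smul_zero, neg_zero, add_zero,
          zero_add, neg_add_rev, smul_smul]
        match_scalars <;> ring
      rw [e10, smul_zero, sub_eq_zero] at k
      exact k
    rw [hDf] at e00
    have hDg : D g = g * f + f * g + algebraMap ℂ R θ := by
      have k2 : D g - (g * f + f * g + algebraMap ℂ R θ) =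
          (1 : ℂ) • (-0 * (f * f) +
              -2 * ((-f ^ 2 + g - (1 / 2 : ℂ) • x - b) * f
                + f * (-f ^ 2 + g - (1 / 2 : ℂ) • x - b)) +
              D g - 1 +
              (2 * (f * f * f) - f * g + f * (x + 2 * b) + (algebraMap ℂ R) θ - 1) * -1 -
            (-(f * f) + (1 / 2 : ℂ) • g - (1 / 2 : ℂ) • x - b) * (-2 * f)) := by
        simp only [pow_succ, pow_zero, one_mul, mul_add, add_mul, mul_sub, sub_mul, neg_mul,
          mul_neg, neg_neg, mul_assoc, mul_one, zero_mul, mul_zero, smul_mul_assoc,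
          mul_smul_comm, h2l, hxf, hxf', smul_add, smul_sub, smul_neg, smul_zero, neg_zero,
          add_zero, zero_add, neg_add_rev, smul_smul]
        match_scalars <;> ring
      rw [e00, smul_zero, sub_eq_zero] at k2
      exact k2
    exact ⟨hDf, hDg⟩
  · -- backward direction
    rintro ⟨hf, hg⟩ lam
    ext i j
    fin_cases i <;> fin_cases j <;>
    (simp only [Fin.mk_zero, Fin.mk_one, Fin.isValue, JM20A, JM20B, Matrix.map_apply,
        Matrix.add_apply, Matrix.smul_apply, Matrix.sub_apply, Matrix.mul_apply,
        Fin.sum_univ_two, Matrix.zero_apply, Matrix.of_apply, Matrix.cons_val',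
        Matrix.cons_val_zero, Matrix.cons_val_one, Matrix.head_cons, Matrix.head_fin_const,
        Matrix.empty_val', Matrix.cons_val_fin_one]
     simp only [pow_succ, pow_zero, one_mul]
     simp only [map_add, map_sub, map_neg, map_smul, hD, hD1, hD2, hDθ, hb, hx1, hf, hg,
        map_zero]
     simp only [mul_add, add_mul, mul_sub, sub_mul, neg_mul, mul_neg, neg_neg, mul_assoc,
        one_mul, mul_one, zero_mul, mul_zero, smul_mul_assoc, mul_smul_comm,
        h2l, h2r, h2c, hxf, hxf', hxg, hxg', hxb, hxb', hdf, hdf',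
        pow_succ, pow_zero, smul_add, smul_sub, smul_neg, smul_zero, neg_zero, add_zero,
        zero_add, neg_add_rev, smul_smul, neg_neg]
     match_scalars <;> ring)
end
end

section
/- Let R be an associative unital ℂ-algebra with a derivation D (write r' := D r), let θ ∈ ℂ, and let f, g, x̄ ∈ R with x̄' = 1. Then f and g satisfy the system f' = −f² + g − (1/2)x̄ and g' = fg + gf + θ if and only if g = f' + f² + (1/2)x̄ and f satisfies the fully non-commutative second Painlevé equation f'' = 2f³ + (1/2)x̄·f + (1/2)f·x̄ + (θ − 1/2). -/
/- STATEMENT 3: f and g satisfy the fully non-commutative second Painlevé system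
f' = −f² + g − (1/2)x̄, g' = fg + gf + θ iff g = f' + f² + (1/2)x̄ and f satisfies the
fully non-commutative second Painlevé equation
f'' = 2f³ + (1/2)x̄·f + (1/2)f·x̄ + (θ − 1/2). -/

theorem P2nc_system_iff_P2nc_equation
    {R : Type*} [Ring R] [Algebra ℂ R]
    (D : R →ₗ[ℂ] R) (hD : ∀ a b : R, D (a * b) = D a * b + a * D b)
    (θ : ℂ) (f g xbar : R) (hx : D xbar = 1) :
    (D f = -f ^ 2 + g - (1 / 2 : ℂ) • xbar ∧
      D g = f * g + g * f + algebraMap ℂ R θ)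
    ↔ (g = D f + f ^ 2 + (1 / 2 : ℂ) • xbar ∧
        D (D f) = 2 * f ^ 3 + (1 / 2 : ℂ) • (xbar * f) + (1 / 2 : ℂ) • (f * xbar)
          + algebraMap ℂ R (θ - 1 / 2)) := by
  have hDf2 : D (f ^ 2) = D f * f + f * D f := by rw [sq, hD]
  have halg : algebraMap ℂ R (θ - 1 / 2) =
      algebraMap ℂ R θ - (1 / 2 : ℂ) • (1 : R) := by
    rw [map_sub]; congr 1; rw [Algebra.algebraMap_eq_smul_one]
  constructor
  · rintro ⟨h1, h2⟩
    have hg : g = D f + f ^ 2 + (1 / 2 : ℂ) • xbar := by rw [h1]; abel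
    refine ⟨hg, ?_⟩
    have hDg : D g = D (D f) + (D f * f + f * D f) + (1 / 2 : ℂ) • (1 : R) := by
      rw [hg, map_add, map_add, hDf2, map_smul, hx]
    have h3 : D (D f) = f * g + g * f + algebraMap ℂ R θ
        - (D f * f + f * D f) - (1 / 2 : ℂ) • (1 : R) := by
      rw [← h2, hDg]; abel
    rw [hg] at h3
    rw [h3, halg]
    simp only [mul_add, add_mul, mul_smul_comm, smul_mul_assoc, pow_succ, pow_zero,
      one_mul, two_mul, mul_assoc]
    abel
  · rintro ⟨hg, hP2⟩
    have h1 : D f = -f ^ 2 + g - (1 / 2 : ℂ) • xbar := by rw [hg]; abel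
    refine ⟨h1, ?_⟩
    have hDg : D g = D (D f) + (D f * f + f * D f) + (1 / 2 : ℂ) • (1 : R) := by
      rw [hg, map_add, map_add, hDf2, map_smul, hx]
    rw [hDg, hP2, halg, hg]
    simp only [mul_add, add_mul, mul_smul_comm, smul_mul_assoc, pow_succ, pow_zero,
      one_mul, two_mul, mul_assoc]
    abel
end

section
/- Let R be an associative unital ℂ-algebra with a derivation D (write r' := D r), let x ∈ R be central with x' = 1, let θ ∈ ℂ, and let f, g, b ∈ R satisfy the P₂⁰ system f' = −f² + g − (1/2)x − b and g' = gf + fg + θ. Then D(fg − gf) = gb − bg. In particular, if b is central in R (e.g. b is a complex scalar), then the commutator [f, g] = fg − gf is a first integral of the P₂⁰ system: D(fg − gf) = 0. (Hence the formal monodromy exponent T₀ = ([f,g] − θ)·1 of the Flaschka–Newell linearization FN₂⁰ is an integral of motion.) -/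
/- STATEMENT 13: along solutions of the P₂⁰ system f' = −f² + g − (1/2)x − b,
g' = gf + fg + θ, one has D(fg − gf) = gb − bg; in particular, if b is central then
the commutator [f, g] is a first integral: D(fg − gf) = 0. -/

theorem P20_commutator_first_integral
    {R : Type*} [Ring R] [Algebra ℂ R]
    (D : R →ₗ[ℂ] R) (hD : ∀ a b : R, D (a * b) = D a * b + a * D b)
    (x : R) (hx : ∀ r : R, x * r = r * x) (hx1 : D x = 1)
    (θ : ℂ) (f g b : R)
    (hf' : D f = -f ^ 2 + g - (1 / 2 : ℂ) • x - b)
    (hg' : D g = g * f + f * g + algebraMap ℂ R θ) :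
    D (f * g - g * f) = g * b - b * g ∧
      ((∀ r : R, b * r = r * b) → D (f * g - g * f) = 0) := by
  have key : D (f * g - g * f) = g * b - b * g := by
    rw [map_sub, hD, hD, hf', hg']
    have hθ : ∀ r : R, algebraMap ℂ R θ * r = r * algebraMap ℂ R θ := fun r =>
      (Algebra.commutes θ r)
    have hs : ∀ r : R, ((1 / 2 : ℂ) • x) * r = r * ((1 / 2 : ℂ) • x) := fun r => by
      rw [smul_mul_assoc, mul_smul_comm, hx]
    rw [sub_mul, sub_mul, add_mul, mul_sub, mul_sub, mul_add, mul_add, mul_add,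
      add_mul] at *
    rw [hθ f, hs g]
    simp only [pow_two, mul_assoc, add_mul, sub_mul, mul_add, mul_sub, mul_neg, neg_mul]
    abel
  exact ⟨key, fun hb => by rw [key, hb g, sub_self]⟩
end

section
/- Let θ ∈ ℂ and set θ̃ = θ − 1/2. Let s₁, s₂, s₃ ∈ ℂ and define the 2×2 complex matrices S₁ = [[1,0],[s₁,1]], S₂ = [[1,s₂],[0,1]], S₃ = [[1,0],[s₃,1]] and σ₁ = [[0,1],[1,0]]. Suppose there exists an invertible matrix C ∈ GL₂(ℂ) such that S₁·S₂·S₃·σ₁ = C · diag(e^{−iπθ̃}, e^{iπθ̃}) · C⁻¹. Then the Stokes multipliers satisfy the affine cubic relation s₁s₂s₃ + s₁ + s₂ + s₃ = 2 sin(πθ). (This is the monodromy surface of the second Painlevé equation associated with the Flaschka–Newell linearization.) -/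
/- STATEMENT 14: the monodromy surface of the second Painlevé equation associated
with the Flaschka–Newell linearization: if S₁S₂S₃σ₁ = C·diag(e^{−iπθ̃}, e^{iπθ̃})·C⁻¹
for some invertible C, where θ̃ = θ − 1/2, then s₁s₂s₃ + s₁ + s₂ + s₃ = 2 sin(πθ). -/

theorem FN_monodromy_surface (θ : ℂ) (s1 s2 s3 : ℂ)
    (C Cinv : Matrix (Fin 2) (Fin 2) ℂ)
    (hC : C * Cinv = 1) (hC' : Cinv * C = 1)
    (hmon : (!![1, 0; s1, 1] : Matrix (Fin 2) (Fin 2) ℂ) * !![1, s2; 0, 1]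
        * !![1, 0; s3, 1] * !![0, 1; 1, 0]
      = C * Matrix.diagonal
          ![Complex.exp (-((Real.pi : ℂ) * Complex.I * (θ - 1 / 2))),
            Complex.exp ((Real.pi : ℂ) * Complex.I * (θ - 1 / 2))] * Cinv) :
    s1 * s2 * s3 + s1 + s2 + s3 = 2 * Complex.sin ((Real.pi : ℂ) * θ) := by
  have ht := congrArg Matrix.trace hmon
  conv at ht => rhs; rw [Matrix.trace_mul_cycle, hC', Matrix.one_mul]
  simp only [Matrix.trace_fin_two, Matrix.mul_apply, Fin.sum_univ_two, Matrix.of_apply,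
    Matrix.cons_val', Matrix.cons_val_zero, Matrix.cons_val_one, Matrix.head_cons,
    Matrix.empty_val', Matrix.cons_val_fin_one, Matrix.head_fin_const,
    Matrix.diagonal_apply_eq, Matrix.diagonal_apply_ne] at ht
  rw [Complex.sin]
  have h1 : -((Real.pi : ℂ) * Complex.I * (θ - 1 / 2))
      = -((Real.pi : ℂ)*θ)*Complex.I + (Real.pi : ℂ)/2*Complex.I := by ring
  have h2 : ((Real.pi : ℂ) * Complex.I * (θ - 1 / 2))
      = ((Real.pi : ℂ)*θ)*Complex.I + -((Real.pi : ℂ)/2*Complex.I) := by ring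
  rw [h1, h2, Complex.exp_add, Complex.exp_add, Complex.exp_neg] at ht
  have hI : Complex.exp ((Real.pi : ℂ)/2*Complex.I) = Complex.I := by
    rw [Complex.exp_mul_I, Complex.cos_pi_div_two, Complex.sin_pi_div_two]; ring
  rw [hI] at ht
  have hI2 : Complex.I * Complex.I = -1 := Complex.I_mul_I
  field_simp at ht ⊢
  ring_nf at ht ⊢
  linear_combination (-Complex.I) * ht + (s2 * s3 * s1 + s2 + s3 + s1 - Complex.I * Complex.exp (-(Complex.I * ↑Real.pi * θ))) * hI2
end

section
/- Let α ∈ ℂ with α ≠ 0 and let s₁, …, s₆ ∈ ℂ. Define the 2×2 complex matrices S₁ = [[1,s₁],[0,1]], S₂ = [[1,0],[s₂,1]], S₃ = [[1,s₃],[0,1]], S₄ = [[1,0],[s₄,1]], S₅ = [[1,s₅],[0,1]], S₆ = [[1,0],[s₆,1]], and suppose the monodromy relation diag(α⁻¹, α) · S₁·S₂·S₃·S₄·S₅·S₆ = I holds (equivalently S₃S₄S₅S₆ = (α^{−σ₃}S₁S₂)⁻¹ with α^{−σ₃} = diag(α⁻¹, α)). Then, setting x₁ = 1 + s₃s₄,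 x₂ = 1 + s₄s₅, x₃ = 1 + s₅s₆, the affine cubic relation x₁x₂x₃ − x₁ − αx₂ − x₃ + (1 + α) = 0 holds. (This is the monodromy surface of the second Painlevé equation associated with the Jimbo–Miwa linearization.) -/
/- STATEMENT 15: the monodromy surface of the second Painlevé equation associated
with the Jimbo–Miwa linearization: if diag(α⁻¹, α)·S₁S₂S₃S₄S₅S₆ = I, then with
x₁ = 1 + s₃s₄, x₂ = 1 + s₄s₅, x₃ = 1 + s₅s₆ one has
x₁x₂x₃ − x₁ − αx₂ − x₃ + (1 + α) = 0. -/

theorem JM_monodromy_surface (α : ℂ) (hα : α ≠ 0) (s1 s2 s3 s4 s5 s6 : ℂ)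
    (hmon : Matrix.diagonal ![α⁻¹, α]
        * ((!![1, s1; 0, 1] : Matrix (Fin 2) (Fin 2) ℂ) * !![1, 0; s2, 1]
          * !![1, s3; 0, 1] * !![1, 0; s4, 1] * !![1, s5; 0, 1] * !![1, 0; s6, 1])
      = 1) :
    (1 + s3 * s4) * (1 + s4 * s5) * (1 + s5 * s6)
      - (1 + s3 * s4) - α * (1 + s4 * s5) - (1 + s5 * s6) + (1 + α) = 0 := by
  have hd : Matrix.diagonal ![α⁻¹, α] = (!![α⁻¹, 0; 0, α] : Matrix (Fin 2) (Fin 2) ℂ) := by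
    ext i j
    fin_cases i <;> fin_cases j <;> simp [Matrix.diagonal]
  rw [hd, Matrix.one_fin_two] at hmon
  simp only [Matrix.mul_fin_two] at hmon
  have h00 := congrFun (congrFun (congrArg (fun M => M) hmon) 0) 0
  have h10 := congrFun (congrFun (congrArg (fun M => M) hmon) 1) 0
  simp only [Matrix.cons_val', Matrix.cons_val_zero, Matrix.cons_val_one, Matrix.head_cons,
    Matrix.empty_val', Matrix.cons_val_fin_one, Matrix.head_fin_const,
    Matrix.of_apply] at h00 h10
  have hinv : α * α⁻¹ = 1 := mul_inv_cancel₀ hα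
  linear_combination (s4 * s5 * α) * h00 - (s4 * s5 * s1 * α⁻¹) * h10
    - (s4 * s5 * ((1 + s3 * s4) * (1 + s5 * s6) + s3 * s6)) * hinv
end

section
/- Let R be an associative unital ℂ-algebra, α ∈ ℂ with α ≠ 0, and s₁, …, s₆, q ∈ R. Suppose the following entry relations hold (coming from the non-abelian Jimbo–Miwa monodromy relation S₃S₄S₅S₆ = (e^{−2πiT₀}S₁S₂)⁻¹): (i) 1 + s₃s₄ + s₃s₆ + s₅s₆ + s₃s₄s₅s₆ = α·q²; (ii) s₃ + s₅ + s₃s₄s₅ = −α⁻¹·s₁; (iii) s₄ + s₆ + s₄s₅s₆ = −α·s₂q²; (iv) 1 + s₄s₅ = α⁻¹·(1 + s₂s₁). Suppose moreover there exists a ℂ-linear anti-automorphism τ : R → R (τ(uv) = τ(v)τ(u), fixing complex scalars) with τ(s_k) = s_k for k = 1,…,6 (so that applying τ to (iv) yields α·(1 + s₅s₄) = 1 + s₁s₂). Then, setting x₁ = 1 + s₃s₄, x₂ = 1 + s₅s₄, x₃ = 1 + s₅s₆, the non-abelian affine cubic relation x₁·x₂·x₃ − x₁ − x₂·(α q²)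 − x₃ + (1 + α)·q² = 0 holds in R. (This is the non-abelian monodromy surface associated with the Jimbo–Miwa-type linearization JM₂⁰ of the non-abelian system P₂⁰, where q = e^{πi[g,f]} and α = e^{−2πiθ}.) -/
/- STATEMENT 17: the non-abelian monodromy surface associated with the
Jimbo–Miwa-type linearization JM₂⁰ of the non-abelian system P₂⁰: from the entry
relations (i)–(iv) of the monodromy relation S₃S₄S₅S₆ = (e^{−2πiT₀}S₁S₂)⁻¹ and a
ℂ-linear anti-automorphism τ fixing the Stokes multipliers, the variables
x₁ = 1 + s₃s₄, x₂ = 1 + s₅s₄, x₃ = 1 + s₅s₆ satisfy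
x₁x₂x₃ − x₁ − x₂(αq²) − x₃ + (1 + α)q² = 0. -/

theorem JM20_nonabelian_monodromy_surface
    {R : Type*} [Ring R] [Algebra ℂ R]
    (α : ℂ) (hα : α ≠ 0) (s1 s2 s3 s4 s5 s6 q : R)
    (h1 : 1 + s3 * s4 + s3 * s6 + s5 * s6 + s3 * s4 * s5 * s6 = α • q ^ 2)
    (h2 : s3 + s5 + s3 * s4 * s5 = -(α⁻¹ • s1))
    (h3 : s4 + s6 + s4 * s5 * s6 = -(α • (s2 * q ^ 2)))
    (h4 : 1 + s4 * s5 = α⁻¹ • (1 + s2 * s1))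
    (τ : R →ₗ[ℂ] R)
    (hτmul : ∀ u v : R, τ (u * v) = τ v * τ u)
    (hτbij : Function.Bijective τ)
    (hτone : τ 1 = 1)
    (hτ1 : τ s1 = s1) (hτ2 : τ s2 = s2) (hτ3 : τ s3 = s3)
    (hτ4 : τ s4 = s4) (hτ5 : τ s5 = s5) (hτ6 : τ s6 = s6) :
    (1 + s3 * s4) * (1 + s5 * s4) * (1 + s5 * s6)
      - (1 + s3 * s4) - (1 + s5 * s4) * (α • q ^ 2) - (1 + s5 * s6)
      + (1 + α) • q ^ 2 = 0 := by
  -- s1 expressed via h2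
  have hs1 : s1 = -(α • (s3 + s5 + s3 * s4 * s5)) := by
    rw [h2, smul_neg, smul_smul, mul_inv_cancel₀ hα, one_smul, neg_neg]
  -- s2 q² expressed via h3
  have hs2q : s2 * q ^ 2 = -(α⁻¹ • (s4 + s6 + s4 * s5 * s6)) := by
    rw [h3, smul_neg, smul_smul, inv_mul_cancel₀ hα, one_smul, neg_neg]
  -- apply τ to h4
  have h4' : 1 + s5 * s4 = α⁻¹ • (1 + s1 * s2) := by
    have := congrArg τ h4
    rw [map_add, map_smul, map_add, hτmul, hτone, hτmul, hτ1, hτ2, hτ4, hτ5] at this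
    exact this
  -- key identity
  have key : (1 + s5 * s4) * (α • q ^ 2)
      = q ^ 2 + (s3 + s5 + s3 * s4 * s5) * (s4 + s6 + s4 * s5 * s6) := by
    calc (1 + s5 * s4) * (α • q ^ 2)
        = (α⁻¹ • (1 + s1 * s2)) * (α • q ^ 2) := by rw [h4']
      _ = (α⁻¹ * α) • ((1 + s1 * s2) * q ^ 2) := by
          rw [smul_mul_assoc, mul_smul_comm, smul_smul]
      _ = (1 + s1 * s2) * q ^ 2 := by rw [inv_mul_cancel₀ hα, one_smul]
      _ = q ^ 2 + s1 * (s2 * q ^ 2) := by noncomm_ring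
      _ = q ^ 2 + (α • (s3 + s5 + s3 * s4 * s5)) * (α⁻¹ • (s4 + s6 + s4 * s5 * s6)) := by
          rw [hs1, hs2q, neg_mul_neg]
      _ = q ^ 2 + (α * α⁻¹) • ((s3 + s5 + s3 * s4 * s5) * (s4 + s6 + s4 * s5 * s6)) := by
          rw [smul_mul_assoc, mul_smul_comm, smul_smul]
      _ = q ^ 2 + (s3 + s5 + s3 * s4 * s5) * (s4 + s6 + s4 * s5 * s6) := by
          rw [mul_inv_cancel₀ hα, one_smul]
  rw [add_smul, one_smul, key, ← h1]
  noncomm_ring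
end
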